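/- arXiv:math/0607739 — 2 statements merged into one kernel-verified Lean document; each statement's English description precedes it below -/
import Mathlib

section
/- Let (G,⊕) be a Smarandache left Bol loop such that for all f,g ∈ G there exists a nontrivial left Bol subloop (S,⊕) of (G,⊕) with f,g ∈ S (i.e., all f,g-principal isotopes of (G,⊕) are Smarandache f,g-principal isotopes). Then (G,⊕) is universal: every loop isotopic to (G,⊕) is a Smarandache left Bol loop. (Theorem 1.6, forward direction, left Bol case) -/
universe u

/-- A loop: a quasigroup with a two-sided identity. Translations
`fun x => mul a x` (left) and `fun x => mul x a` (right) are bijections. -/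
structure LoopStr (G : Type u) where
  mul : G → G → G
  one : G
  one_mul : ∀ x, mul one x = x
  mul_one : ∀ x, mul x one = x
  leftBij : ∀ a, Function.Bijective fun x => mul a x
  rightBij : ∀ a, Function.Bijective fun x => mul x a

namespace LoopStr

variable {G : Type u}

/-- The left translation `L_a : x ↦ a ⊕ x` as a bijection of `G`. -/
noncomputable def L (M : LoopStr G) (a : G) : G ≃ G :=
  Equiv.ofBijective _ (M.leftBij a)

/-- The right translation `R_a : x ↦ x ⊕ a` as a bijection of `G`. -/
noncomputable def R (M : LoopStr G) (a : G) : G ≃ G :=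
  Equiv.ofBijective _ (M.rightBij a)

@[simp] theorem L_apply (M : LoopStr G) (a x : G) : M.L a x = M.mul a x := rfl
@[simp] theorem R_apply (M : LoopStr G) (a x : G) : M.R a x = M.mul x a := rfl

/-- The right inverse `x^ρ`, characterized by `x ⊕ x^ρ = e`. -/
noncomputable def rinv (M : LoopStr G) (x : G) : G := (M.L x).symm M.one

/-- The left inverse `x^λ`, characterized by `x^λ ⊕ x = e`. -/
noncomputable def linv (M : LoopStr G) (x : G) : G := (M.R x).symm M.one

/-- `M` and `N` are isotopic: there are bijections `A, B, C` with
`(xA) ⊗ (yB) = (x ⊕ y)C` for all `x, y`. -/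
def Isotopic (M : LoopStr G) {H : Type u} (N : LoopStr H) : Prop :=
  ∃ A B C : G ≃ H, ∀ x y, N.mul (A x) (B y) = C (M.mul x y)

/-- The multiplication `x ∘ y = (x R_g⁻¹) ⊕ (y L_f⁻¹)` of the
`f,g`-principal isotope. -/
noncomputable def pMul (M : LoopStr G) (f g x y : G) : G :=
  M.mul ((M.R g).symm x) ((M.L f).symm y)

/-- `S` is a subloop of `(G, ⊕)`: it contains the identity, is closed under
multiplication, and for `a ∈ S` the translations restrict to bijections of `S`. -/
structure IsSubloop (M : LoopStr G) (S : Set G) : Prop where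
  one_mem : M.one ∈ S
  mul_mem : ∀ {x y}, x ∈ S → y ∈ S → M.mul x y ∈ S
  left_bijOn : ∀ {a}, a ∈ S → Set.BijOn (fun x => M.mul a x) S S
  right_bijOn : ∀ {a}, a ∈ S → Set.BijOn (fun x => M.mul x a) S S

/-- A nontrivial (sub)set: more than one element, and a proper subset. -/
def NontrivialSub (S : Set G) : Prop := S.Nontrivial ∧ S ≠ Set.univ

/-- `(U, V, W)` is an autotopism of the subloop `(S, ⊕)`: each map restricts to a
bijection of `S` and `(xU) ⊕ (yV) = (x ⊕ y)W` for all `x, y ∈ S`. -/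
def IsAutotopismOn (M : LoopStr G) (S : Set G) (U V W : G → G) : Prop :=
  Set.BijOn U S S ∧ Set.BijOn V S S ∧ Set.BijOn W S S ∧
    ∀ x ∈ S, ∀ y ∈ S, M.mul (U x) (V y) = W (M.mul x y)

end LoopStr

open LoopStr

variable {G : Type u}

/-- The subset `S` satisfies the left Bol identity
`(x⊕(y⊕x))⊕z = x⊕(y⊕(x⊕z))`. -/
def LeftBolOn (M : LoopStr G) (S : Set G) : Prop :=
  ∀ x ∈ S, ∀ y ∈ S, ∀ z ∈ S,
    M.mul (M.mul x (M.mul y x)) z = M.mul x (M.mul y (M.mul x z))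

section Aux

variable {M : LoopStr G} {S : Set G}

/-- The inverse of a bijection of `G` that restricts to a bijection of `S`
also restricts to a bijection of `S`. -/
lemma bijOn_symm {e : G ≃ G} (h : Set.BijOn e S S) : Set.BijOn e.symm S S := by
  refine ⟨fun x hx => ?_, fun x _ y _ hxy => e.symm.injective hxy, fun x hx => ?_⟩
  · obtain ⟨y, hy, hyx⟩ := h.surjOn hx
    simpa [← hyx] using hy
  · exact ⟨e x, h.mapsTo hx, e.symm_apply_apply x⟩

lemma L_symm_mem (hS : M.IsSubloop S) {a x : G} (ha : a ∈ S) (hx : x ∈ S) :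
    (M.L a).symm x ∈ S := (bijOn_symm (hS.left_bijOn ha)).mapsTo hx

lemma R_symm_mem (hS : M.IsSubloop S) {a x : G} (ha : a ∈ S) (hx : x ∈ S) :
    (M.R a).symm x ∈ S := (bijOn_symm (hS.right_bijOn ha)).mapsTo hx

lemma pMul_mem (hS : M.IsSubloop S) {f g x y : G} (hf : f ∈ S) (hg : g ∈ S)
    (hx : x ∈ S) (hy : y ∈ S) : M.pMul f g x y ∈ S :=
  hS.mul_mem (R_symm_mem hS hg hx) (L_symm_mem hS hf hy)

/-- Left inverse property on a left Bol subloop. -/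
lemma lip (hB : LeftBolOn M S) {x xl z : G} (hx : x ∈ S) (hxl : xl ∈ S)
    (hz : z ∈ S) (he : M.mul xl x = M.one) :
    M.mul xl (M.mul x z) = z := by
  have hbol := hB x hx xl hxl z hz
  rw [he, M.mul_one] at hbol
  have := (M.leftBij x).1 (a₁ := z) (a₂ := M.mul xl (M.mul x z)) (by simpa using hbol)
  exact this.symm

/-- In a left Bol subloop, `(M.L f).symm` acts as left multiplication by the
left inverse of `f`. -/
lemma exists_linv (hS : M.IsSubloop S) (hB : LeftBolOn M S) {f : G} (hf : f ∈ S) :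
    ∃ fl ∈ S, ∀ w ∈ S, (M.L f).symm w = M.mul fl w := by
  obtain ⟨fl, hfl, hfe⟩ := (hS.right_bijOn hf).surjOn hS.one_mem
  simp only at hfe
  obtain ⟨fll, hfll, hfle⟩ := (hS.right_bijOn hfl).surjOn hS.one_mem
  simp only at hfle
  have hfllf : fll = f := by
    have := lip hB hfl hfll hf hfle
    rw [hfe, M.mul_one] at this; exact this
  refine ⟨fl, hfl, fun w hw => ?_⟩
  rw [Equiv.symm_apply_eq]
  have := lip hB hfl hfll hw hfle
  rw [hfllf] at this
  simpa using this.symm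

/-- The left Bol identity is preserved by `f,g`-principal isotopes, on a left Bol
subloop containing `f` and `g`. -/
lemma pMul_leftBol (hS : M.IsSubloop S) (hB : LeftBolOn M S) {f g : G}
    (hf : f ∈ S) (hg : g ∈ S) :
    ∀ x ∈ S, ∀ y ∈ S, ∀ z ∈ S,
      M.pMul f g (M.pMul f g x (M.pMul f g y x)) z
        = M.pMul f g x (M.pMul f g y (M.pMul f g x z)) := by
  obtain ⟨fl, hfl, hL⟩ := exists_linv hS hB hf
  intro x hx y hy z hz
  set x' := (M.R g).symm x with hx'def
  set y' := (M.R g).symm y with hy'def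
  have hx' : x' ∈ S := R_symm_mem hS hg hx
  have hy' : y' ∈ S := R_symm_mem hS hg hy
  have hxg : M.mul x' g = x := (M.R g).apply_symm_apply x
  set b := M.mul fl (M.mul y' fl) with hbdef
  have hb : b ∈ S := hS.mul_mem hfl (hS.mul_mem hy' hfl)
  set w := M.mul x' (M.mul b x') with hwdef
  have hw : w ∈ S := hS.mul_mem hx' (hS.mul_mem hb hx')
  have hflz : M.mul fl z ∈ S := hS.mul_mem hfl hz
  -- key computation: x' ⊕ (fl ⊕ (y' ⊕ (fl ⊕ (x' ⊕ d)))) = w ⊕ d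
  have key : ∀ d ∈ S, M.mul x' (M.mul fl (M.mul y' (M.mul fl (M.mul x' d))))
      = M.mul w d := by
    intro d hd
    have h1 := hB fl hfl y' hy' (M.mul x' d) (hS.mul_mem hx' hd)
    have h2 := hB x' hx' b hb d hd
    rw [h1] at h2
    exact h2.symm
  -- the inner product on the LHS
  have hinner : M.pMul f g x (M.pMul f g y x) = M.mul w g := by
    show M.mul x' ((M.L f).symm (M.pMul f g y x)) = M.mul w g
    have hyx : M.pMul f g y x ∈ S := pMul_mem hS hf hg hy hx
    rw [hL _ hyx]
    show M.mul x' (M.mul fl (M.pMul f g y x)) = M.mul w g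
    have : M.pMul f g y x = M.mul y' ((M.L f).symm x) := rfl
    rw [this, hL _ hx, ← hxg, key g hg]
  have hRw : (M.R g).symm (M.mul w g) = w := by
    have : M.mul w g = M.R g w := rfl
    rw [this, Equiv.symm_apply_apply]
  calc M.pMul f g (M.pMul f g x (M.pMul f g y x)) z
      = M.mul ((M.R g).symm (M.mul w g)) ((M.L f).symm z) := by rw [hinner]; rfl
    _ = M.mul w (M.mul fl z) := by rw [hRw, hL _ hz]
    _ = M.mul x' (M.mul fl (M.mul y' (M.mul fl (M.mul x' (M.mul fl z))))) := by
        rw [key _ hflz]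
    _ = M.pMul f g x (M.pMul f g y (M.pMul f g x z)) := by
        have hxz : M.pMul f g x z = M.mul x' (M.mul fl z) := by
          show M.mul x' ((M.L f).symm z) = _
          rw [hL _ hz]
        have hxz' : M.pMul f g x z ∈ S := pMul_mem hS hf hg hx hz
        have hyxz : M.pMul f g y (M.pMul f g x z)
            = M.mul y' (M.mul fl (M.mul x' (M.mul fl z))) := by
          show M.mul y' ((M.L f).symm (M.pMul f g x z)) = _
          rw [hL _ hxz', hxz]
        have hyxz' : M.pMul f g y (M.pMul f g x z) ∈ S := pMul_mem hS hf hg hy hxz'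
        show _ = M.mul x' ((M.L f).symm (M.pMul f g y (M.pMul f g x z)))
        rw [hL _ hyxz', hyxz]

end Aux

/-- A Smarandache left Bol loop `(G, ⊕)` such that for all `f, g ∈ G` there is a
nontrivial left Bol subloop containing `f` and `g` (i.e. all of whose
`f,g`-principal isotopes are Smarandache `f,g`-principal isotopes) is universal:
every loop isotopic to it is a Smarandache left Bol loop. -/
theorem smarandache_left_bol_universal (M : LoopStr G)
    (hSm : ∃ S : Set G, M.IsSubloop S ∧ NontrivialSub S ∧ LeftBolOn M S)
    (h : ∀ f g : G, ∃ S : Set G, M.IsSubloop S ∧ NontrivialSub S ∧ LeftBolOn M S ∧ f ∈ S ∧ g ∈ S) :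
    ∀ (H : Type u) (N : LoopStr H), M.Isotopic N →
      ∃ S : Set H, N.IsSubloop S ∧ NontrivialSub S ∧ LeftBolOn N S := by
  rintro H N ⟨A, B, C, hABC⟩
  set f := A.symm N.one with hfdef
  set g := B.symm N.one with hgdef
  -- A u = C (u ⊕ g) and B v = C (f ⊕ v)
  have hA : ∀ u, A u = C (M.mul u g) := by
    intro u
    have := hABC u g
    rwa [hgdef, Equiv.apply_symm_apply, N.mul_one] at this
  have hB' : ∀ v, B v = C (M.mul f v) := by
    intro v
    have := hABC f v
    rwa [hfdef, Equiv.apply_symm_apply, N.one_mul] at this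
  -- the key isotopy identity
  have star : ∀ x y, N.mul (C x) (C y) = C (M.pMul f g x y) := by
    intro x y
    have := hABC ((M.R g).symm x) ((M.L f).symm y)
    rw [hA, hB'] at this
    have hx : M.mul ((M.R g).symm x) g = x := (M.R g).apply_symm_apply x
    have hy : M.mul f ((M.L f).symm y) = y := (M.L f).apply_symm_apply y
    rw [hx, hy] at this
    exact this
  have hone : N.one = C (M.mul f g) := by
    have := hA f
    rwa [hfdef, Equiv.apply_symm_apply] at this
  obtain ⟨S, hS, ⟨hSnt, hSne⟩, hBol, hf, hg⟩ := h f g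
  refine ⟨C '' S, ?_, ?_, ?_⟩
  · -- subloop
    have hCS : Set.BijOn C S (C '' S) := C.injective.injOn.bijOn_image
    have hCS' : Set.BijOn C.symm (C '' S) S := by
      refine ⟨fun x hx => ?_, fun x _ y _ hxy => C.symm.injective hxy, fun x hx => ?_⟩
      · obtain ⟨s, hs, rfl⟩ := hx; simpa using hs
      · exact ⟨C x, Set.mem_image_of_mem _ hx, C.symm_apply_apply x⟩
    refine ⟨⟨M.mul f g, hS.mul_mem hf hg, hone.symm⟩, ?_, ?_, ?_⟩
    · rintro _ _ ⟨a, ha, rfl⟩ ⟨b, hb, rfl⟩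
      rw [star]
      exact Set.mem_image_of_mem _ (pMul_mem hS hf hg ha hb)
    · rintro _ ⟨s, hs, rfl⟩
      have hφ : Set.BijOn (fun t => M.pMul f g s t) S S := by
        have h1 : Set.BijOn (fun t => (M.L f).symm t) S S := bijOn_symm (hS.left_bijOn hf)
        have h2 : Set.BijOn (fun t => M.mul ((M.R g).symm s) t) S S :=
          hS.left_bijOn (R_symm_mem hS hg hs)
        exact h2.comp h1
      have heq : (fun x => N.mul (C s) x)
          = C ∘ (fun t => M.pMul f g s t) ∘ C.symm := by
        funext x
        show N.mul (C s) x = C (M.pMul f g s (C.symm x))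
        conv_lhs => rw [← C.apply_symm_apply x]
        rw [star]
      rw [heq]
      exact hCS.comp (hφ.comp hCS')
    · rintro _ ⟨s, hs, rfl⟩
      have hφ : Set.BijOn (fun t => M.pMul f g t s) S S := by
        have h1 : Set.BijOn (fun t => (M.R g).symm t) S S := bijOn_symm (hS.right_bijOn hg)
        have h2 : Set.BijOn (fun t => M.mul t ((M.L f).symm s)) S S :=
          hS.right_bijOn (L_symm_mem hS hf hs)
        exact h2.comp h1
      have heq : (fun x => N.mul x (C s))
          = C ∘ (fun t => M.pMul f g t s) ∘ C.symm := by
        funext x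
        show N.mul x (C s) = C (M.pMul f g (C.symm x) s)
        conv_lhs => rw [← C.apply_symm_apply x]
        rw [star]
      rw [heq]
      exact hCS.comp (hφ.comp hCS')
  · -- nontrivial
    obtain ⟨a, ha, b, hb, hab⟩ := hSnt
    refine ⟨⟨C a, Set.mem_image_of_mem _ ha, C b, Set.mem_image_of_mem _ hb,
      fun hCab => hab (C.injective hCab)⟩, ?_⟩
    intro hT
    apply hSne
    ext x
    simp only [Set.mem_univ, iff_true]
    have : C x ∈ C '' S := hT ▸ Set.mem_univ _
    obtain ⟨s, hs, hsx⟩ := this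
    rwa [← C.injective hsx]
  · -- left Bol
    rintro _ ⟨a, ha, rfl⟩ _ ⟨b, hb, rfl⟩ _ ⟨c, hc, rfl⟩
    rw [star b a, star a (M.pMul f g b a), star (M.pMul f g a (M.pMul f g b a)) c,
      star a c, star b (M.pMul f g a c), star a (M.pMul f g b (M.pMul f g a c))]
    exact congrArg C (pMul_leftBol hS hBol hf hg a ha b hb c hc)
end

section
/- Let (G,⊕) be a Smarandache extra loop such that for all f,g ∈ G there exists a nontrivial extra subloop (S,⊕) of (G,⊕) with f,g ∈ S (i.e., all f,g-principal isotopes of (G,⊕) are Smarandache f,g-principal isotopes). Then (G,⊕) is universal: every loop isotopic to (G,⊕) is a Smarandache extra loop. (Theorem 1.8, forward direction) -/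
universe u

open LoopStr

variable {G : Type u}

/-- The subset `S` satisfies the extra identity
`((x⊕y)⊕z)⊕x = x⊕(y⊕(z⊕x))`. -/
def ExtraOn (M : LoopStr G) (S : Set G) : Prop :=
  ∀ x ∈ S, ∀ y ∈ S, ∀ z ∈ S,
    M.mul (M.mul (M.mul x y) z) x = M.mul x (M.mul y (M.mul z x))

/-! ### Auxiliary material -/

/-- An extra loop structure: the extra identity holds globally. -/
def xlExtra (M : LoopStr G) : Prop :=
  ∀ x y z, M.mul (M.mul (M.mul x y) z) x = M.mul x (M.mul y (M.mul z x))

theorem xl_lcancel (M : LoopStr G) (a : G) {x y : G}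
    (h : M.mul a x = M.mul a y) : x = y :=
  (M.leftBij a).1 h

theorem xl_rcancel (M : LoopStr G) (a : G) {x y : G}
    (h : M.mul x a = M.mul y a) : x = y :=
  (M.rightBij a).1 h

theorem xl_mul_rinv (M : LoopStr G) (x : G) : M.mul x (M.rinv x) = M.one :=
  (M.L x).apply_symm_apply M.one

/-- `x ⊕ (x⁻¹ ⊕ t) = t` in an extra loop. -/
theorem xl_lip1 (M : LoopStr G) (hE : xlExtra M) (x t : G) :
    M.mul x (M.mul (M.rinv x) t) = t := by
  obtain ⟨z, rfl⟩ : ∃ z, M.mul z x = t := ⟨(M.R x).symm t, (M.R x).apply_symm_apply t⟩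
  have h := hE x (M.rinv x) z
  rw [xl_mul_rinv, M.one_mul] at h
  exact h.symm

/-- `x⁻¹ ⊕ (x ⊕ t) = t` in an extra loop. -/
theorem xl_lip2 (M : LoopStr G) (hE : xlExtra M) (x t : G) :
    M.mul (M.rinv x) (M.mul x t) = t := by
  apply xl_lcancel M x
  rw [xl_lip1 M hE x (M.mul x t)]

theorem xl_rinv_mul (M : LoopStr G) (hE : xlExtra M) (x : G) :
    M.mul (M.rinv x) x = M.one := by
  have h := xl_lip2 M hE x M.one
  rwa [M.mul_one] at h

/-- `(t ⊕ x⁻¹) ⊕ x = t` in an extra loop. -/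
theorem xl_rip1 (M : LoopStr G) (hE : xlExtra M) (x t : G) :
    M.mul (M.mul t (M.rinv x)) x = t := by
  obtain ⟨y, rfl⟩ : ∃ y, M.mul x y = t := ⟨(M.L x).symm t, (M.L x).apply_symm_apply t⟩
  have h := hE x y (M.rinv x)
  rw [xl_rinv_mul M hE, M.mul_one] at h
  exact h

/-- `(t ⊕ x) ⊕ x⁻¹ = t` in an extra loop. -/
theorem xl_rip2 (M : LoopStr G) (hE : xlExtra M) (x t : G) :
    M.mul (M.mul t x) (M.rinv x) = t := by
  apply xl_rcancel M x
  rw [xl_rip1 M hE x (M.mul t x)]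

theorem xl_rinv_rinv (M : LoopStr G) (hE : xlExtra M) (x : G) :
    M.rinv (M.rinv x) = x := by
  apply xl_lcancel M (M.rinv x)
  rw [xl_mul_rinv, xl_rinv_mul M hE]

/-- The fundamental autotopism identity of an extra loop:
`(c⊕x) ⊕ (y⊕c⁻¹) = (c⊕(x⊕y)) ⊕ c⁻¹`. -/
theorem xl_atopA (M : LoopStr G) (hE : xlExtra M) (c x y : G) :
    M.mul (M.mul c x) (M.mul y (M.rinv c)) =
      M.mul (M.mul c (M.mul x y)) (M.rinv c) := by
  apply xl_rcancel M c
  have h := hE c x (M.mul y (M.rinv c))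
  rw [xl_rip1 M hE c y] at h
  rw [h, xl_rip1 M hE c (M.mul c (M.mul x y))]

/-- Antiautomorphic inverse property. -/
theorem xl_aaip (M : LoopStr G) (hE : xlExtra M) (x y : G) :
    M.rinv (M.mul x y) = M.mul (M.rinv y) (M.rinv x) := by
  apply xl_lcancel M (M.mul x y)
  rw [xl_mul_rinv, xl_atopA M hE x y (M.rinv y), xl_mul_rinv, M.mul_one, xl_mul_rinv]

/-- `((c⊕x)⊕c⁻¹) ⊕ (c⊕y) = c⊕(x⊕y)` in an extra loop. -/
theorem xl_atopB (M : LoopStr G) (hE : xlExtra M) (c x y : G) :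
    M.mul (M.mul (M.mul c x) (M.rinv c)) (M.mul c y) = M.mul c (M.mul x y) := by
  have h1 := xl_atopA M hE c (M.mul x y) (M.rinv y)
  rw [xl_rip2 M hE y x] at h1
  rw [← h1, ← xl_aaip M hE c y]
  exact xl_rip1 M hE (M.mul c y) (M.mul c (M.mul x y))

/-- `(x⊕c⁻¹) ⊕ ((c⊕y)⊕c⁻¹) = (x⊕y)⊕c⁻¹` in an extra loop. -/
theorem xl_atopC (M : LoopStr G) (hE : xlExtra M) (c x y : G) :
    M.mul (M.mul x (M.rinv c)) (M.mul (M.mul c y) (M.rinv c)) =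
      M.mul (M.mul x y) (M.rinv c) := by
  have h := xl_atopA M hE c (M.rinv x) (M.mul x y)
  rw [xl_lip2 M hE x y] at h
  rw [← h]
  have e : M.mul x (M.rinv c) = M.rinv (M.mul c (M.rinv x)) := by
    rw [xl_aaip M hE, xl_rinv_rinv M hE]
  rw [e]
  exact xl_lip2 M hE (M.mul c (M.rinv x)) (M.mul (M.mul x y) (M.rinv c))

/-- The master identity: `ψ(u) = (f⊕g) ⊕ ((f⊕u)⊕f⁻¹)` is a loop isomorphism
from an extra loop onto its `f,g`-principal isotope (whose multiplication is
`(x⊕g⁻¹) ⊕ (f⁻¹⊕y)`). -/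
theorem xl_key (M : LoopStr G) (hE : xlExtra M) (f g s t : G) :
    M.mul (M.mul (M.mul (M.mul f g) (M.mul (M.mul f s) (M.rinv f))) (M.rinv g))
      (M.mul (M.rinv f) (M.mul (M.mul f g) (M.mul (M.mul f t) (M.rinv f))))
    = M.mul (M.mul f g) (M.mul (M.mul f (M.mul s t)) (M.rinv f)) := by
  have psi_eq : ∀ u, M.mul (M.mul f g) (M.mul (M.mul f u) (M.rinv f))
      = M.mul (M.mul f (M.mul g (M.mul f u))) (M.rinv f) := fun u =>
    xl_atopA M hE f g (M.mul f u)
  have step2 : M.mul (M.rinv f) (M.mul (M.mul f g) (M.mul (M.mul f t) (M.rinv f)))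
      = M.mul (M.mul g (M.mul f t)) (M.rinv f) := by
    rw [psi_eq t]
    have h := xl_atopC M hE f M.one (M.mul g (M.mul f t))
    rw [M.one_mul, M.one_mul] at h
    exact h
  have step3 : M.mul (M.mul (M.mul f g) (M.mul (M.mul f s) (M.rinv f))) (M.rinv g)
      = M.mul f (M.mul (M.mul g (M.mul (M.mul f s) (M.rinv f))) (M.rinv g)) := by
    have h := xl_atopC M hE g (M.mul f g) (M.mul (M.mul f s) (M.rinv f))
    rw [xl_rip2 M hE g f] at h
    exact h.symm
  rw [step3, step2,
    xl_atopA M hE f (M.mul (M.mul g (M.mul (M.mul f s) (M.rinv f))) (M.rinv g))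
      (M.mul g (M.mul f t)),
    xl_atopB M hE g (M.mul (M.mul f s) (M.rinv f)) (M.mul f t),
    xl_atopB M hE f s t, psi_eq (M.mul s t)]

/-- The loop structure induced on a subloop. -/
noncomputable def LoopStr.xlSub (M : LoopStr G) {S : Set G} (hS : M.IsSubloop S) :
    LoopStr ↥S where
  mul x y := ⟨M.mul x.1 y.1, hS.mul_mem x.2 y.2⟩
  one := ⟨M.one, hS.one_mem⟩
  one_mul x := Subtype.ext (M.one_mul x.1)
  mul_one x := Subtype.ext (M.mul_one x.1)
  leftBij a := by
    constructor
    · intro x y hxy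
      exact Subtype.ext ((M.leftBij a.1).1 (congrArg Subtype.val hxy))
    · intro y
      obtain ⟨x, hx, hxy⟩ := (hS.left_bijOn a.2).surjOn y.2
      exact ⟨⟨x, hx⟩, Subtype.ext hxy⟩
  rightBij a := by
    constructor
    · intro x y hxy
      exact Subtype.ext ((M.rightBij a.1).1 (congrArg Subtype.val hxy))
    · intro y
      obtain ⟨x, hx, hxy⟩ := (hS.right_bijOn a.2).surjOn y.2
      exact ⟨⟨x, hx⟩, Subtype.ext hxy⟩

theorem xlSub_mul_coe (M : LoopStr G) {S : Set G} (hS : M.IsSubloop S)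
    (x y : ↥S) : ((M.xlSub hS).mul x y).1 = M.mul x.1 y.1 := rfl

theorem xlSub_val_mk {S : Set G} (a : G) (h : a ∈ S) :
    (Subtype.mk a h : ↥S).1 = a := rfl

theorem xlSub_rinv_coe (M : LoopStr G) {S : Set G} (hS : M.IsSubloop S)
    (x : ↥S) : ((M.xlSub hS).rinv x).1 = M.rinv x.1 := by
  have h1 : M.mul x.1 ((M.xlSub hS).rinv x).1 = M.one :=
    congrArg Subtype.val (xl_mul_rinv (M.xlSub hS) x)
  exact xl_lcancel M x.1 (h1.trans (xl_mul_rinv M x.1).symm)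

/-- Transfer of a Smarandache extra subloop along an injective loop
homomorphism (on the subloop). -/
theorem xl_transfer {H : Type u} (M : LoopStr G) (N : LoopStr H) (Φ : G → H)
    (S : Set G) (hS : M.IsSubloop S) (hNT : NontrivialSub S) (hX : ExtraOn M S)
    (hinj : Function.Injective Φ)
    (hmul : ∀ {s t : G}, s ∈ S → t ∈ S → N.mul (Φ s) (Φ t) = Φ (M.mul s t))
    (hone : Φ M.one = N.one) :
    ∃ T : Set H, N.IsSubloop T ∧ NontrivialSub T ∧ ExtraOn N T := by
  refine ⟨Φ '' S, ⟨⟨M.one, hS.one_mem, hone⟩, ?_, ?_, ?_⟩, ⟨?_, ?_⟩, ?_⟩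
  · rintro x y ⟨s, hs, rfl⟩ ⟨t, ht, rfl⟩
    exact ⟨M.mul s t, hS.mul_mem hs ht, (hmul hs ht).symm⟩
  · rintro a ⟨s, hs, rfl⟩
    refine ⟨?_, fun x _ y _ hxy => (N.leftBij (Φ s)).1 hxy, ?_⟩
    · rintro x ⟨t, ht, rfl⟩
      exact ⟨M.mul s t, hS.mul_mem hs ht, (hmul hs ht).symm⟩
    · rintro z ⟨r, hr, rfl⟩
      obtain ⟨t, ht, htr⟩ := (hS.left_bijOn hs).surjOn hr
      refine ⟨Φ t, ⟨t, ht, rfl⟩, ?_⟩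
      show N.mul (Φ s) (Φ t) = Φ r
      rw [hmul hs ht]
      exact congrArg Φ htr
  · rintro a ⟨s, hs, rfl⟩
    refine ⟨?_, fun x _ y _ hxy => (N.rightBij (Φ s)).1 hxy, ?_⟩
    · rintro x ⟨t, ht, rfl⟩
      exact ⟨M.mul t s, hS.mul_mem ht hs, (hmul ht hs).symm⟩
    · rintro z ⟨r, hr, rfl⟩
      obtain ⟨t, ht, htr⟩ := (hS.right_bijOn hs).surjOn hr
      refine ⟨Φ t, ⟨t, ht, rfl⟩, ?_⟩
      show N.mul (Φ t) (Φ s) = Φ r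
      rw [hmul ht hs]
      exact congrArg Φ htr
  · obtain ⟨x, hx, y, hy, hxy⟩ := hNT.1
    exact ⟨Φ x, ⟨x, hx, rfl⟩, Φ y, ⟨y, hy, rfl⟩, fun hh => hxy (hinj hh)⟩
  · intro hU
    obtain ⟨z, hz⟩ := (Set.ne_univ_iff_exists_notMem S).1 hNT.2
    have hzT : Φ z ∈ Φ '' S := by rw [hU]; exact Set.mem_univ _
    obtain ⟨s, hs, hsz⟩ := hzT
    exact hz ((hinj hsz) ▸ hs)
  · rintro a ⟨x, hx, rfl⟩ b ⟨y, hy, rfl⟩ c ⟨z, hz, rfl⟩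
    rw [hmul hx hy, hmul (hS.mul_mem hx hy) hz,
      hmul (hS.mul_mem (hS.mul_mem hx hy) hz) hx, hmul hz hx,
      hmul hy (hS.mul_mem hz hx), hmul hx (hS.mul_mem hy (hS.mul_mem hz hx))]
    exact congrArg Φ (hX x hx y hy z hz)

/-- A Smarandache extra loop `(G, ⊕)` such that for all `f, g ∈ G` there is a
nontrivial extra subloop containing `f` and `g` (i.e. all of whose
`f,g`-principal isotopes are Smarandache `f,g`-principal isotopes) is universal:
every loop isotopic to it is a Smarandache extra loop. -/
theorem smarandache_extra_universal (M : LoopStr G)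
    (hSm : ∃ S : Set G, M.IsSubloop S ∧ NontrivialSub S ∧ ExtraOn M S)
    (h : ∀ f g : G, ∃ S : Set G, M.IsSubloop S ∧ NontrivialSub S ∧ ExtraOn M S ∧ f ∈ S ∧ g ∈ S) :
    ∀ (H : Type u) (N : LoopStr H), M.Isotopic N →
      ∃ S : Set H, N.IsSubloop S ∧ NontrivialSub S ∧ ExtraOn N S := by
  intro H N hiso
  obtain ⟨A, B, C, hABC⟩ := hiso
  obtain ⟨S, hS, hNT, hX, hfS, hgS⟩ := h (A.symm N.one) (B.symm N.one)
  set f := A.symm N.one with hf_def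
  set g := B.symm N.one with hg_def
  have hPE : xlExtra (M.xlSub hS) := fun x y z =>
    Subtype.ext (hX x.1 x.2 y.1 y.2 z.1 z.2)
  have hifS : M.rinv f ∈ S := by
    have h2 := ((M.xlSub hS).rinv ⟨f, hfS⟩).2
    rw [xlSub_rinv_coe M hS ⟨f, hfS⟩] at h2
    exact h2
  have hAf : A f = N.one := by rw [hf_def]; exact A.apply_symm_apply N.one
  have hBg : B g = N.one := by rw [hg_def]; exact B.apply_symm_apply N.one
  have hA : ∀ x, A x = C (M.mul x g) := by
    intro x
    have h1 := hABC x g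
    rwa [hBg, N.mul_one] at h1
  have hB : ∀ y, B y = C (M.mul f y) := by
    intro y
    have h1 := hABC f y
    rwa [hAf, N.one_mul] at h1
  have hCone : C (M.mul f g) = N.one := by rw [← hA f]; exact hAf
  have hCmul : ∀ u v, N.mul (C u) (C v) = C (M.pMul f g u v) := by
    intro u v
    have e1 : M.mul ((M.R g).symm u) g = u := (M.R g).apply_symm_apply u
    have e2 : M.mul f ((M.L f).symm v) = v := (M.L f).apply_symm_apply v
    have h1 := hABC ((M.R g).symm u) ((M.L f).symm v)
    rw [hA, hB, e1, e2] at h1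
    exact h1
  have hRsymm : ∀ {X : G}, X ∈ S → (M.R g).symm X = M.mul X (M.rinv g) := by
    intro X hXS
    apply (M.R g).injective
    have h2 : M.mul (M.mul X ((M.xlSub hS).rinv ⟨g, hgS⟩).1) g = X :=
      congrArg Subtype.val (xl_rip1 (M.xlSub hS) hPE ⟨g, hgS⟩ ⟨X, hXS⟩)
    rw [xlSub_rinv_coe M hS ⟨g, hgS⟩] at h2
    exact ((M.R g).apply_symm_apply X).trans h2.symm
  have hLsymm : ∀ {Y : G}, Y ∈ S → (M.L f).symm Y = M.mul (M.rinv f) Y := by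
    intro Y hYS
    apply (M.L f).injective
    have h2 : M.mul f (M.mul ((M.xlSub hS).rinv ⟨f, hfS⟩).1 Y) = Y :=
      congrArg Subtype.val (xl_lip1 (M.xlSub hS) hPE ⟨f, hfS⟩ ⟨Y, hYS⟩)
    rw [xlSub_rinv_coe M hS ⟨f, hfS⟩] at h2
    exact ((M.L f).apply_symm_apply Y).trans h2.symm
  refine xl_transfer M N
    (fun u => C (M.mul (M.mul f g) (M.mul (M.mul f u) (M.rinv f)))) S hS hNT hX
    ?_ ?_ ?_
  · intro a b hab
    exact xl_lcancel M f (xl_rcancel M (M.rinv f)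
      (xl_lcancel M (M.mul f g) (C.injective hab)))
  · intro s t hs ht
    have hkey := congrArg Subtype.val
      (xl_key (M.xlSub hS) hPE ⟨f, hfS⟩ ⟨g, hgS⟩ ⟨s, hs⟩ ⟨t, ht⟩)
    simp only [xlSub_mul_coe, xlSub_rinv_coe, xlSub_val_mk] at hkey
    show N.mul (C (M.mul (M.mul f g) (M.mul (M.mul f s) (M.rinv f))))
        (C (M.mul (M.mul f g) (M.mul (M.mul f t) (M.rinv f))))
      = C (M.mul (M.mul f g) (M.mul (M.mul f (M.mul s t)) (M.rinv f)))
    rw [hCmul]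
    refine congrArg C ?_
    show M.mul ((M.R g).symm (M.mul (M.mul f g) (M.mul (M.mul f s) (M.rinv f))))
        ((M.L f).symm (M.mul (M.mul f g) (M.mul (M.mul f t) (M.rinv f)))) = _
    rw [hRsymm (hS.mul_mem (hS.mul_mem hfS hgS)
        (hS.mul_mem (hS.mul_mem hfS hs) hifS)),
      hLsymm (hS.mul_mem (hS.mul_mem hfS hgS)
        (hS.mul_mem (hS.mul_mem hfS ht) hifS))]
    exact hkey
  · show C (M.mul (M.mul f g) (M.mul (M.mul f M.one) (M.rinv f))) = N.one
    rw [M.mul_one, xl_mul_rinv, M.mul_one]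
    exact hCone
end
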